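/- arXiv:2605.16773 — 5 statements merged into one kernel-verified Lean document; each statement's English description precedes it below -/
import Mathlib

section
/- The generating function of the number of super partitions weighted by $q^{2|\Lambda|}$ equals $\prod_{k=1}^\infty \frac{1+q^{2k-1}}{1-q^{2k}}$; that is, the number of super partitions of total weight $m/2$ equals the coefficient of $q^m$ in $\prod_{k\ge 1}(1+q^{2k-1})/(1-q^{2k})$. -/
/-!
Doubling every part of a super partition `Λ` gives a partition of `2|Λ|` whose odd parts
`2a + 1` are distinct and whose even parts are arbitrary; conversely, halving the parts recovers
`Λ`. The generating function of partitions with distinct odd parts is Mathlib's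
`Nat.Partition.genFun` for the character that forbids repeated odd parts, whose product formula
has the factor `1 + X ^ i` at odd `i` and `1 + X ^ i + X ^ (2 * i) + ⋯ = (1 - X ^ i)⁻¹` at even `i`.
Factors with `i > m` are `≡ 1 mod X ^ (m + 1)`, so the coefficient of `X ^ m` only sees the finite
product over `i ≤ 2 * m`.
-/

open Finset PowerSeries
open scoped PowerSeries.WithPiTopology

theorem Multiset.map_map_eq_self {α β : Type*} {f : α → β} {g : β → α} {s : Multiset α}
    (h : ∀ x ∈ s, g (f x) = x) : (s.map f).map g = s :=
  (Multiset.map_map g f s).trans ((Multiset.map_congr rfl h).trans (Multiset.map_id s))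

theorem Finset.prod_range_two_mul_eq_prod_Icc {M : Type*} [CommMonoid M] (f : ℕ → M) (m : ℕ) :
    ∏ i ∈ range (2 * m), f (i + 1) = ∏ k ∈ Icc 1 m, (f (2 * k - 1) * f (2 * k)) := by
  induction m with
  | zero => simp
  | succ m ih =>
    rw [prod_Icc_succ_top (by omega), ← ih, mul_add_one, prod_range_succ, prod_range_succ,
      mul_assoc]
    rfl

namespace PowerSeries

variable {R : Type*} [CommRing R]

theorem coeff_mul_of_X_pow_dvd_sub_one {f g : R⟦X⟧} {n : ℕ} (hg : X ^ (n + 1) ∣ g - 1) :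
    coeff n (f * g) = coeff n f := by
  obtain ⟨h, hh⟩ := hg
  rw [show f * g = f + X ^ (n + 1) * (f * h) by linear_combination f * hh, map_add,
    coeff_X_pow_mul', if_neg (by omega), add_zero]

theorem X_pow_dvd_prod_sub_one {ι : Type*} {f : ι → R⟦X⟧} {k : ℕ} (s : Finset ι)
    (hf : ∀ i ∈ s, X ^ k ∣ f i - 1) : X ^ k ∣ ∏ i ∈ s, f i - 1 := by
  simp only [← Ideal.mem_span_singleton, ← Ideal.Quotient.eq, map_prod, map_one] at hf ⊢
  exact prod_eq_one hf

theorem coeff_eq_coeff_prod_of_hasProd [TopologicalSpace R] [T2Space R] {ι : Type*}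
    {f : ι → R⟦X⟧} {F : R⟦X⟧} (hF : HasProd f F) (s : Finset ι) (n : ℕ)
    (hf : ∀ i ∉ s, X ^ (n + 1) ∣ f i - 1) : coeff n F = coeff n (∏ i ∈ s, f i) := by
  classical
  have hlim := (WithPiTopology.tendsto_iff_coeff_tendsto R _ _ _).mp hF n
  refine tendsto_nhds_unique hlim (tendsto_atTop_of_eventually_const (i₀ := s) fun t hst => ?_)
  rw [← prod_sdiff hst, mul_comm, coeff_mul_of_X_pow_dvd_sub_one
    (X_pow_dvd_prod_sub_one _ fun i hi => hf i (mem_sdiff.mp hi).2)]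

end PowerSeries

namespace Nat.Partition

def oddPartsDistinct (n : ℕ) : Finset n.Partition :=
  univ.filter fun p => (p.parts.filter Odd).Nodup

section Semiring

variable {R : Type*} [CommSemiring R]

def oddPartsDistinctChar (i c : ℕ) : R := if Odd i → c = 1 then 1 else 0

theorem coeff_genFun_oddPartsDistinctChar (n : ℕ) :
    coeff n (genFun (oddPartsDistinctChar (R := R))) = #(oddPartsDistinct n) := by
  simp_rw [coeff_genFun, oddPartsDistinct, card_filter, Finsupp.prod, oddPartsDistinctChar,
    prod_boole]
  push_cast
  refine sum_congr rfl fun p _ => ?_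
  congr 1
  simp only [Multiset.toFinsupp_support, Multiset.mem_toFinset, Multiset.toFinsupp_apply,
    Multiset.nodup_iff_count_le_one, Multiset.count_filter, eq_iff_iff]
  refine ⟨fun h a => ?_, fun h i hi hodd => ?_⟩
  · split_ifs with hodd
    · by_cases ha : a ∈ p.parts
      · exact (h a ha hodd).le
      · simp [Multiset.count_eq_zero_of_notMem ha]
    · exact zero_le_one
  · have := h i
    rw [if_pos hodd] at this
    have := Multiset.count_pos.mpr hi
    omega

end Semiring

section Field

variable (K : Type*) [Field K]

noncomputable def oddPartsDistinctFactor (i : ℕ) : K⟦X⟧ :=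
  if Odd i then 1 + X ^ i else (1 - X ^ i)⁻¹

variable {K}

theorem X_pow_dvd_oddPartsDistinctFactor_sub_one {i : ℕ} (hi : i ≠ 0) :
    X ^ i ∣ oddPartsDistinctFactor K i - 1 := by
  unfold oddPartsDistinctFactor
  split_ifs
  · simp
  · have hinv : (1 - X ^ i : K⟦X⟧)⁻¹ * (1 - X ^ i) = 1 :=
      PowerSeries.inv_mul_cancel _ (by simp [hi])
    exact ⟨(1 - X ^ i)⁻¹, by linear_combination hinv⟩

variable [TopologicalSpace K] [IsTopologicalRing K] [T2Space K]

theorem one_add_tsum_oddPartsDistinctChar (i : ℕ) :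
    (1 : K⟦X⟧) + ∑' j, oddPartsDistinctChar (R := K) (i + 1) (j + 1) • X ^ ((i + 1) * (j + 1)) =
      oddPartsDistinctFactor K (i + 1) := by
  have hX : constantCoeff (X ^ (i + 1) : K⟦X⟧) = 0 := by simp
  unfold oddPartsDistinctFactor
  split_ifs with hodd
  · rw [tsum_eq_single 0 fun j hj => by simp [oddPartsDistinctChar, hodd, hj]]
    simp [oddPartsDistinctChar]
  · simp only [oddPartsDistinctChar, hodd, false_imp_iff, if_true, one_smul, pow_mul]
    have hgeom := WithPiTopology.summable_pow_of_constantCoeff_eq_zero hX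
    rw [PowerSeries.eq_inv_iff_mul_eq_one (by simp)]
    calc (1 + ∑' j, (X ^ (i + 1)) ^ (j + 1)) * (1 - X ^ (i + 1))
        = (∑' j, (X ^ (i + 1) : K⟦X⟧) ^ j) * (1 - X ^ (i + 1)) := by
          rw [hgeom.tsum_eq_zero_add, pow_zero]
      _ = 1 := WithPiTopology.tsum_pow_mul_one_sub_of_constantCoeff_eq_zero hX

theorem hasProd_oddPartsDistinctFactor :
    HasProd (fun i => oddPartsDistinctFactor K (i + 1)) (genFun oddPartsDistinctChar) := by
  simpa only [one_add_tsum_oddPartsDistinctChar] using hasProd_genFun (R := K) oddPartsDistinctChar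

end Field

end Nat.Partition

abbrev SuperPartition (m : ℕ) : Type :=
  {p : Finset ℕ × Multiset ℕ // (∀ x ∈ p.2, 0 < x) ∧ (∑ a ∈ p.1, (2 * a + 1)) + 2 * p.2.sum = m}

namespace SuperPartition

def toParts (p : Finset ℕ × Multiset ℕ) : Multiset ℕ :=
  p.1.val.map (2 * · + 1) + p.2.map (2 * ·)

def ofParts (M : Multiset ℕ) (hM : (M.filter Odd).Nodup) : Finset ℕ × Multiset ℕ :=
  (⟨(M.filter Odd).map (· / 2), hM.map_on fun x hx y hy hxy => by
      rw [Multiset.mem_filter, Nat.odd_iff] at hx hy; omega⟩,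
    (M.filter (¬ Odd ·)).map (· / 2))

theorem filter_odd_toParts (p : Finset ℕ × Multiset ℕ) :
    (toParts p).filter Odd = p.1.val.map (2 * · + 1) := by
  rw [toParts, Multiset.filter_add, Multiset.filter_eq_self.mpr (by simp),
    Multiset.filter_eq_nil.mpr (by simp), add_zero]

theorem filter_not_odd_toParts (p : Finset ℕ × Multiset ℕ) :
    (toParts p).filter (¬ Odd ·) = p.2.map (2 * ·) := by
  rw [toParts, Multiset.filter_add, Multiset.filter_eq_nil.mpr (by simp),
    Multiset.filter_eq_self.mpr (by simp), zero_add]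

theorem nodup_filter_odd_toParts (p : Finset ℕ × Multiset ℕ) :
    ((toParts p).filter Odd).Nodup := by
  rw [filter_odd_toParts]
  exact p.1.nodup.map fun x y h => by omega

theorem sum_toParts (p : Finset ℕ × Multiset ℕ) :
    (toParts p).sum = (∑ a ∈ p.1, (2 * a + 1)) + 2 * p.2.sum := by
  rw [toParts, Multiset.sum_add, Multiset.sum_map_mul_left, Multiset.map_id']
  rfl

theorem pos_of_mem_toParts {p : Finset ℕ × Multiset ℕ} (hp : ∀ x ∈ p.2, 0 < x) {i : ℕ}
    (hi : i ∈ toParts p) : 0 < i := by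
  rcases Multiset.mem_add.mp hi with hi | hi <;> obtain ⟨x, hx, rfl⟩ := Multiset.mem_map.mp hi
  · omega
  · have := hp x hx
    omega

theorem pos_of_mem_ofParts_snd {M : Multiset ℕ} (hM : (M.filter Odd).Nodup)
    (hpos : ∀ i ∈ M, 0 < i) : ∀ x ∈ (ofParts M hM).2, 0 < x := by
  intro x hx
  obtain ⟨y, hy, rfl⟩ := Multiset.mem_map.mp hx
  rw [Multiset.mem_filter, Nat.odd_iff] at hy
  have := hpos y hy.1
  omega

theorem toParts_ofParts (M : Multiset ℕ) (hM : (M.filter Odd).Nodup) :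
    toParts (ofParts M hM) = M := by
  have hodd : ((M.filter Odd).map (· / 2)).map (2 * · + 1) = M.filter Odd :=
    Multiset.map_map_eq_self fun x hx => by
      rw [Multiset.mem_filter, Nat.odd_iff] at hx
      omega
  have heven : ((M.filter (¬ Odd ·)).map (· / 2)).map (2 * ·) = M.filter (¬ Odd ·) :=
    Multiset.map_map_eq_self fun x hx => by
      rw [Multiset.mem_filter, Nat.not_odd_iff] at hx
      omega
  rw [toParts, ofParts]
  dsimp only
  rw [hodd, heven, Multiset.filter_add_not]

theorem ofParts_toParts (p : Finset ℕ × Multiset ℕ) (h : ((toParts p).filter Odd).Nodup) :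
    ofParts (toParts p) h = p := by
  ext1
  · apply Finset.val_injective
    show ((toParts p).filter Odd).map (· / 2) = p.1.val
    rw [filter_odd_toParts]
    exact Multiset.map_map_eq_self fun x _ => by omega
  · show ((toParts p).filter (¬ Odd ·)).map (· / 2) = p.2
    rw [filter_not_odd_toParts]
    exact Multiset.map_map_eq_self fun x _ => by omega

def equivOddPartsDistinct (m : ℕ) :
    SuperPartition m ≃ {q : m.Partition // (q.parts.filter Odd).Nodup} where
  toFun p := ⟨⟨toParts p.1, pos_of_mem_toParts p.2.1, (sum_toParts _).trans p.2.2⟩,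
    nodup_filter_odd_toParts p.1⟩
  invFun q := ⟨ofParts q.1.parts q.2, pos_of_mem_ofParts_snd q.2 fun _ => q.1.parts_pos,
    by rw [← sum_toParts, toParts_ofParts, q.1.parts_sum]⟩
  left_inv p := Subtype.ext (ofParts_toParts p.1 (nodup_filter_odd_toParts p.1))
  right_inv q := Subtype.ext (Nat.Partition.ext (toParts_ofParts q.1.parts q.2))

theorem natCard_eq_card_oddPartsDistinct (m : ℕ) :
    Nat.card (SuperPartition m) = #(Nat.Partition.oddPartsDistinct m) := by
  rw [Nat.card_congr (equivOddPartsDistinct m), Nat.card_eq_fintype_card, Fintype.card_subtype]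
  rfl

end SuperPartition

/-- The number of super partitions of total weight `m/2` equals the coefficient
of `q^m` in `∏_{k≥1} (1+q^{2k-1})/(1-q^{2k})`.  A super partition is encoded as a pair
consisting of a finite set `A ⊆ ℕ` (the odd parts are `a + 1/2` for `a ∈ A`, necessarily
distinct) and a multiset `S` of positive integers (the even parts), with
`2|Λ| = ∑_{a∈A}(2a+1) + 2·(S.sum)`.  Since factors with index `k > m` do not contribute to
the coefficient of `q^m`, the infinite product is represented by its truncation at `k = m`. -/
theorem superPartition_genFunc (m : ℕ) :
    (Nat.card {p : Finset ℕ × Multiset ℕ //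
        (∀ x ∈ p.2, 0 < x) ∧ (∑ a ∈ p.1, (2 * a + 1)) + 2 * p.2.sum = m} : ℚ) =
      PowerSeries.coeff (R := ℚ) m
        (∏ k ∈ Finset.Icc 1 m,
          ((1 + PowerSeries.X ^ (2 * k - 1)) * (1 - PowerSeries.X ^ (2 * k))⁻¹)) := by
  have htail (i : ℕ) (hi : i ∉ range (2 * m)) :
      X ^ (m + 1) ∣ Nat.Partition.oddPartsDistinctFactor ℚ (i + 1) - 1 :=
    (pow_dvd_pow X (by rw [mem_range] at hi; omega)).trans
      (Nat.Partition.X_pow_dvd_oddPartsDistinctFactor_sub_one i.succ_ne_zero)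
  rw [SuperPartition.natCard_eq_card_oddPartsDistinct,
    ← Nat.Partition.coeff_genFun_oddPartsDistinctChar,
    coeff_eq_coeff_prod_of_hasProd Nat.Partition.hasProd_oddPartsDistinctFactor _ m htail,
    prod_range_two_mul_eq_prod_Icc]
  refine congrArg _ (prod_congr rfl fun k hk => ?_)
  have hk : 1 ≤ k := (mem_Icc.mp hk).1
  rw [Nat.Partition.oddPartsDistinctFactor, Nat.Partition.oddPartsDistinctFactor,
    if_pos ⟨k - 1, by omega⟩, if_neg (Nat.not_odd_iff_even.mpr (even_two_mul k))]
end

section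
/- For $N$ variables and a parameter $t$, the identity $\sum_{i=1}^N \prod_{j\neq i} \frac{x_i - t x_j}{x_i - x_j} = \frac{1-t^N}{1-t}$ holds as an identity of rational functions. -/
/-! With `P = ∏ⱼ (X - xⱼ)` and `Q = ∏ⱼ (X - t xⱼ)`, the polynomial `D = Q - tᴺ P` has degree at
most `N`, coefficient `1 - tᴺ` at `Xᴺ` and no constant term, so `g = D / X` has degree `< N` and
coefficient `1 - tᴺ` at `Xᴺ⁻¹`. By Lagrange interpolation that coefficient is
`∑ᵢ g(xᵢ) / ∏_{j≠i} (xᵢ - xⱼ)`. Splitting off the node `xᵢ` gives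
`g = (1 - t) ∏_{j≠i} (X - t xⱼ) + t (X - xᵢ) g'`, with `g'` built from the remaining nodes, hence
`g(xᵢ) = (1 - t) ∏_{j≠i} (xᵢ - t xⱼ)` without ever dividing by `xᵢ`, which may vanish. -/

open Polynomial Finset Lagrange

section NodalDiff

variable {R ι : Type*} [CommRing R] (s : Finset ι) (x : ι → R) (t : R)

noncomputable def nodalDiff : R[X] :=
  nodal s (fun j => t * x j) - C (t ^ #s) * nodal s x

theorem coeff_zero_nodalDiff : (nodalDiff s x t).coeff 0 = 0 := by
  have h : ∏ j ∈ s, (0 - t * x j) = t ^ #s * ∏ j ∈ s, (0 - x j) := by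
    rw [← prod_const, ← prod_mul_distrib]
    exact prod_congr rfl fun j _ => by ring
  rw [coeff_zero_eq_eval_zero, nodalDiff, eval_sub, eval_mul, eval_C, eval_nodal, eval_nodal, h,
    sub_self]

theorem divX_nodalDiff_mul_X : (nodalDiff s x t).divX * X = nodalDiff s x t := by
  simpa [coeff_zero_nodalDiff] using divX_mul_X_add (nodalDiff s x t)

theorem nodalDiff_eq_of_mem [DecidableEq ι] {i : ι} (hi : i ∈ s) :
    nodalDiff s x t = C (1 - t) * nodal (s.erase i) (fun j => t * x j) * X +
      C t * (X - C (x i)) * nodalDiff (s.erase i) x t := by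
  rw [nodalDiff, nodalDiff, nodal_eq_mul_nodal_erase hi, nodal_eq_mul_nodal_erase hi,
    ← card_erase_add_one hi, pow_succ']
  simp only [map_mul, map_sub, map_one]
  ring

theorem divX_nodalDiff_eq_of_mem [DecidableEq ι] {i : ι} (hi : i ∈ s) :
    (nodalDiff s x t).divX = C (1 - t) * nodal (s.erase i) (fun j => t * x j) +
      C t * (X - C (x i)) * (nodalDiff (s.erase i) x t).divX := by
  refine isRegular_X.right (?_ : _ * X = _ * X)
  rw [divX_nodalDiff_mul_X, nodalDiff_eq_of_mem s x t hi, add_mul,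
    mul_assoc (C t * (X - C (x i))), divX_nodalDiff_mul_X]

theorem eval_divX_nodalDiff [DecidableEq ι] {i : ι} (hi : i ∈ s) :
    (nodalDiff s x t).divX.eval (x i) = (1 - t) * ∏ j ∈ s.erase i, (x i - t * x j) := by
  rw [divX_nodalDiff_eq_of_mem s x t hi]
  simp [eval_nodal]

variable [Nontrivial R]

theorem degree_nodalDiff_le : (nodalDiff s x t).degree ≤ #s := by
  rw [nodalDiff, C_mul']
  exact (degree_sub_le _ _).trans <| max_le degree_nodal.le <|
    (degree_smul_le _ _).trans degree_nodal.le

theorem coeff_nodalDiff_card : (nodalDiff s x t).coeff #s = 1 - t ^ #s := by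
  rw [nodalDiff, coeff_sub, coeff_C_mul, ← natDegree_nodal (v := fun j => t * x j),
    nodal_monic.coeff_natDegree, natDegree_nodal, ← natDegree_nodal (v := x),
    nodal_monic.coeff_natDegree, mul_one]

theorem degree_divX_nodalDiff_lt : (nodalDiff s x t).divX.degree < #s := by
  by_cases h : nodalDiff s x t = 0
  · rw [h, divX_zero, degree_zero]
    exact WithBot.bot_lt_coe _
  · exact (degree_divX_lt h).trans_le (degree_nodalDiff_le s x t)

theorem coeff_divX_nodalDiff : (nodalDiff s x t).divX.coeff (#s - 1) = 1 - t ^ #s := by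
  rcases s.eq_empty_or_nonempty with rfl | hs
  · simp [nodalDiff]
  · rw [coeff_divX, Nat.sub_add_cancel hs.card_pos, coeff_nodalDiff_card]

end NodalDiff

theorem sum_prod_sub_mul_div_sub {K ι : Type*} [Field K] [DecidableEq ι] (s : Finset ι)
    (x : ι → K) {t : K} (ht : t ≠ 1) (hx : Set.InjOn x s) :
    ∑ i ∈ s, ∏ j ∈ s.erase i, (x i - t * x j) / (x i - x j) = (1 - t ^ #s) / (1 - t) := by
  have hcoeff := coeff_eq_sum hx (degree_divX_nodalDiff_lt s x t)
  rw [coeff_divX_nodalDiff] at hcoeff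
  rw [eq_div_iff (sub_ne_zero.2 ht.symm), hcoeff, sum_mul]
  refine sum_congr rfl fun i hi => ?_
  rw [eval_divX_nodalDiff s x t hi, prod_div_distrib]
  ring

/-- For pairwise distinct `x₁,…,x_N` in a field and `t ≠ 1`,
`∑_{i=1}^N ∏_{j≠i} (x_i - t x_j)/(x_i - x_j) = (1-t^N)/(1-t)`. -/
theorem sum_prod_t_identity {K : Type} [Field K] (N : ℕ) (t : K) (ht : t ≠ 1)
    (x : Fin N → K) (hx : Function.Injective x) :
    ∑ i : Fin N, ∏ j ∈ Finset.univ.erase i, (x i - t * x j) / (x i - x j) =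
      (1 - t ^ N) / (1 - t) := by
  simpa using sum_prod_sub_mul_div_sub univ x ht hx.injOn
end

section
/- Define $c_k$ and $\widetilde{c}_k$ by the generating functions $\sum_{k\ge 0} c_k z^k = \exp(\sum_{r\ge1} \frac{1-t^r}{r} p_r z^r)$ and $\sum_{k\ge 0} \widetilde{c}_k z^{-k} = \exp(\sum_{n\ge1} (q^{-n}-1) \partial_{p_n} z^{-n})$, acting on the polynomial ring $\mathbb{Q}(q,t)[p_1, p_2, \ldots]$. Then the commutator satisfies $[\widetilde{c}_k, c_\ell] = (1-t)(q^{-1}-1) \sum_{m=0}^{k-1} [[k-m]]_{(t, q^{-1})} \, c_{m+\ell-k} \, \widetilde{c}_m$, where $c_n = 0$ for $n < 0$ and $[[n]]_{(t_1,t_2)} = \sum_{j=0}^{n-1} t_1^j t_2^{n-1-j}$. -/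
noncomputable section

variable {K : Type} [Field K] [CharZero K]

/-- Coefficient of `z^n` in `exp f` for a power series `f` (over the bosonic polynomial ring
`K[p₁,p₂,…]`, modelled as `MvPolynomial ℕ K` with `X r ↔ p_r`) with zero constant term. -/
def expCoeffP (f : PowerSeries (MvPolynomial ℕ K)) (n : ℕ) : MvPolynomial ℕ K :=
  PowerSeries.coeff n (∑ k ∈ Finset.range (n + 1), ((k.factorial : K)⁻¹) • f ^ k)

/-- `c_k[p]`, defined by the generating function
`∑_{k≥0} c_k z^k = exp(∑_{r≥1} (1-t^r)/r · p_r z^r)`.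
(The dual coefficients `c_k^∨` are `cPoly t⁻¹ k`.) -/
def cPoly (t : K) (k : ℕ) : MvPolynomial ℕ K :=
  expCoeffP (PowerSeries.mk fun r =>
    if r = 0 then 0 else ((1 - t ^ r) / (r : K)) • MvPolynomial.X r) k

/-- `c_z` for `z ∈ ℤ`, with `c_z = 0` for `z < 0`. -/
def cPolyZ (t : K) (z : ℤ) : MvPolynomial ℕ K :=
  if 0 ≤ z then cPoly t z.toNat else 0

/-- The substitution `p_n ↦ p_n + b_n w^n`, which is how the normally ordered exponential
`exp(∑_{n≥1} b_n ∂_{p_n} z^{-n})` acts on polynomials in the `p`'s (with `w = z⁻¹`). -/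
def subShift (b : ℕ → K) (g : MvPolynomial ℕ K) : Polynomial (MvPolynomial ℕ K) :=
  MvPolynomial.aeval
    (fun n => Polynomial.C (MvPolynomial.X n) +
      Polynomial.C (MvPolynomial.C (b n)) * Polynomial.X ^ n) g

/-- The operator coefficient of `z^{-k}` in `exp(∑_{n≥1} b_n ∂_{p_n} z^{-n})`:
`ctOp b k g` is the coefficient of `w^k` in `g(p_n + b_n w^n)`. -/
def ctOp (b : ℕ → K) (k : ℕ) (g : MvPolynomial ℕ K) : MvPolynomial ℕ K :=
  (subShift b g).coeff k

/-- Parameters `b_n = q^{-n} - 1` giving `\widetilde{c}_k = ctOp (bq q) k`. -/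
def bq (q : K) : ℕ → K := fun n => q⁻¹ ^ n - 1

/-- Parameters `b_n = q^n - 1` giving `\widetilde{c}_k^∨ = ctOp (bqVee q) k`. -/
def bqVee (q : K) : ℕ → K := fun n => q ^ n - 1

/-- `[[n]]_{(t₁,t₂)} = ∑_{j=0}^{n-1} t₁^j t₂^{n-1-j}`. -/
def qtInt (t₁ t₂ : K) (n : ℕ) : K := ∑ j ∈ Finset.range n, t₁ ^ j * t₂ ^ (n - 1 - j)

end

/-
The substitution `p_n ↦ p_n + b_n w^n` is a ring homomorphism and `ctOp b k` reads off the
coefficient of `w^k`, so `ctOp b k (c_ℓ g) = ∑_{i + m = k} [w^i] (c_ℓ(p + b w)) · ctOp b m g`.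
Applied to `∑ c_ℓ z^ℓ = exp (∑ (1 - t^r)/r · p_r z^r)`, the substitution multiplies the generating
function by the scalar series `exp (∑ (1 - t^r) b_r / r · (wz)^r) = ∑ e_i (wz)^i`, hence
`[w^i] c_ℓ(p + b w) = e_i c_{ℓ-i}`. For `b_r = s^r - 1` with `s = q⁻¹` the exponent is
`-log (1 - sz) - log (1 - tz) + log (1 - z) + log (1 - tsz)`, so
`∑ e_i z^i = (1 - z)(1 - tsz) / ((1 - sz)(1 - tz)) = 1 + (1 - t)(s - 1) z / ((1 - sz)(1 - tz))`,
i.e. `e_0 = 1` and `e_i = (1 - t)(s - 1) [[i]]_{(t,s)}` for `i ≥ 1`; the `e_0` term is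
`c_ℓ · ctOp b k g`, which the commutator removes.

Exponentials of power series without constant term are handled through the differential equation
`E' = f' E`, `E(0) = 1`, which determines `exp f` and yields `exp (f + g) = exp f · exp g`.
-/

open PowerSeries Finset
open scoped Nat Polynomial

noncomputable section

namespace PowerSeries

variable (K : Type*) [Field K] {S S' : Type*} [CommRing S] [Algebra K S]
  [CommRing S'] [Algebra K S']

def expPartialSum (N : ℕ) (f : S⟦X⟧) : S⟦X⟧ := ∑ k ∈ range (N + 1), (k ! : K)⁻¹ • f ^ k

/-- `exp f`, meaningful when `constantCoeff f = 0`: then `f ^ k` only affects coefficients `≥ k`. -/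
def expSeries (f : S⟦X⟧) : S⟦X⟧ := mk fun n => coeff n (expPartialSum K n f)

variable {K}

theorem X_pow_dvd_expSeries_sub {f : S⟦X⟧} (hf : constantCoeff f = 0) (N : ℕ) :
    X ^ (N + 1) ∣ expSeries K f - expPartialSum K N f := by
  refine X_pow_dvd_iff.mpr fun m hm => ?_
  rw [map_sub, expSeries, coeff_mk, sub_eq_zero, expPartialSum, expPartialSum, map_sum, map_sum]
  refine sum_subset (range_subset_range.mpr (by omega)) fun k _ hk => ?_
  have hmk : m < k := by simpa using hk
  rw [coeff_smul, X_pow_dvd_iff.mp (pow_dvd_pow_of_dvd (X_dvd_iff.mpr hf) k) m hmk, smul_zero]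

theorem coeff_mul_expSeries {f : S⟦X⟧} (hf : constantCoeff f = 0) (g : S⟦X⟧) {n N : ℕ}
    (hn : n ≤ N) : coeff n (g * expSeries K f) = coeff n (g * expPartialSum K N f) := by
  rw [← sub_eq_zero, ← map_sub, ← mul_sub]
  exact X_pow_dvd_iff.mp (dvd_mul_of_dvd_right (X_pow_dvd_expSeries_sub hf N) g) n (by omega)

theorem derivative_expPartialSum_succ [CharZero K] (N : ℕ) (f : S⟦X⟧) :
    d⁄dX S (expPartialSum K (N + 1) f) = d⁄dX S f * expPartialSum K N f := by
  rw [expPartialSum, sum_range_succ', expPartialSum, mul_sum, map_add, map_sum]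
  simp only [pow_zero, Derivation.map_smul_of_tower, Derivation.map_one_eq_zero, smul_zero,
    add_zero]
  refine sum_congr rfl fun k _ => ?_
  have hk : ((k + 1) ! : K)⁻¹ * (k + 1 : ℕ) = (k ! : K)⁻¹ := by
    rw [Nat.factorial_succ, Nat.cast_mul, mul_inv, mul_comm, ← mul_assoc,
      mul_inv_cancel₀ (Nat.cast_ne_zero.mpr k.succ_ne_zero), one_mul]
  rw [Derivation.leibniz_pow, Nat.add_sub_cancel, smul_eq_mul, ← Nat.cast_smul_eq_nsmul K,
    smul_smul, hk, mul_smul_comm, mul_comm]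

theorem derivative_expSeries [CharZero K] {f : S⟦X⟧} (hf : constantCoeff f = 0) :
    d⁄dX S (expSeries K f) = d⁄dX S f * expSeries K f := by
  ext n
  rw [coeff_derivative, coeff_mul_expSeries hf _ le_rfl, ← derivative_expPartialSum_succ,
    coeff_derivative, expSeries, coeff_mk]

@[simp]
theorem constantCoeff_expSeries (f : S⟦X⟧) : constantCoeff (expSeries K f) = 1 := by
  simp [expSeries, expPartialSum]

theorem eq_expSeries_of_derivative_eq [CharZero K] {f E : S⟦X⟧} (hf : constantCoeff f = 0)
    (hE : d⁄dX S E = d⁄dX S f * E) (h0 : constantCoeff E = 1) : E = expSeries K f := by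
  ext n
  induction n using Nat.strong_induction_on with
  | _ n ih =>
    cases n with
    | zero => simpa using h0
    | succ n =>
      have hd : coeff n (d⁄dX S E) = coeff n (d⁄dX S (expSeries K f)) := by
        rw [hE, derivative_expSeries hf, coeff_mul, coeff_mul]
        refine sum_congr rfl fun p hp => ?_
        rw [ih p.2 (by have := mem_antidiagonal.mp hp; omega)]
      have hunit : IsUnit ((n + 1 : ℕ) : S) := by
        simpa using
          (isUnit_iff_ne_zero.mpr (n.cast_add_one_ne_zero (R := K))).map (algebraMap K S)
      rw [coeff_derivative, coeff_derivative] at hd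
      exact hunit.mul_left_cancel (by simpa [mul_comm] using hd)

theorem expSeries_add [CharZero K] {f g : S⟦X⟧} (hf : constantCoeff f = 0)
    (hg : constantCoeff g = 0) : expSeries K (f + g) = expSeries K f * expSeries K g := by
  refine (eq_expSeries_of_derivative_eq (by simp [hf, hg]) ?_ (by simp)).symm
  rw [Derivation.leibniz, derivative_expSeries hf, derivative_expSeries hg, map_add, smul_eq_mul,
    smul_eq_mul]
  ring

theorem map_expSeries (ρ : S →ₐ[K] S') (f : S⟦X⟧) :
    map (ρ : S →+* S') (expSeries K f) = expSeries K (map (ρ : S →+* S') f) := by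
  have hpartial (N : ℕ) :
      mapAlgHom ρ (expPartialSum K N f) = expPartialSum K N (mapAlgHom ρ f) := by
    simp [expPartialSum, map_sum, map_smul, map_pow]
  ext n
  rw [expSeries, expSeries, coeff_map, coeff_mk, coeff_mk, ← coeff_map, ← mapAlgHom_apply,
    hpartial, mapAlgHom_apply]

theorem rescale_expSeries (a : S) (f : S⟦X⟧) :
    rescale a (expSeries K f) = expSeries K (rescale a f) := by
  ext n
  simp [expSeries, expPartialSum, coeff_rescale, map_sum, ← map_pow, mul_sum]

/-- `-log (1 - a X)`; the constant coefficient is `1 / 0 = 0`. -/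
def logSeries (a : K) : K⟦X⟧ := mk fun r => a ^ r / r

@[simp]
theorem constantCoeff_logSeries (a : K) : constantCoeff (logSeries a) = 0 := by
  simp [logSeries]

theorem derivative_logSeries [CharZero K] (a : K) :
    d⁄dX K (logSeries a) = C a * rescale a (mk 1) := by
  ext n
  rw [coeff_derivative, coeff_C_mul, coeff_rescale, logSeries, coeff_mk, coeff_mk, Pi.one_apply,
    mul_one, ← Nat.cast_succ, div_mul_cancel₀ _ (Nat.cast_ne_zero.mpr n.succ_ne_zero), pow_succ']

theorem expSeries_logSeries [CharZero K] (a : K) :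
    expSeries K (logSeries a) = rescale a (mk 1) := by
  refine (eq_expSeries_of_derivative_eq (constantCoeff_logSeries a) ?_ ?_).symm
  · ext n
    have hterm : ∀ p ∈ antidiagonal n,
        coeff p.1 (rescale a (mk 1)) * coeff p.2 (rescale a (mk (1 : ℕ → K))) = a ^ n := by
      intro p hp
      simp [coeff_rescale, ← mem_antidiagonal.mp hp, pow_add]
    rw [derivative_logSeries, mul_assoc, coeff_C_mul, coeff_mul, sum_congr rfl hterm, sum_const,
      Nat.card_antidiagonal, coeff_derivative, coeff_rescale, coeff_mk, Pi.one_apply, nsmul_eq_mul]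
    push_cast
    ring
  · rw [← coeff_zero_eq_constantCoeff_apply, coeff_rescale]
    simp

theorem rescale_mk_one_mul_one_sub (a : K) : rescale a (mk 1) * (1 - C a * X) = 1 := by
  rw [← rescale_X, ← map_one (rescale a), ← map_sub, ← map_mul, mk_one_mul_one_sub_eq_one, map_one]

/-- In `A[w]⟦z⟧`: `[z^ℓ w^i] F(z) G(wz) = [z^ℓ] z^i F(z) · G_i`. -/
theorem coeff_coeff_map_C_mul_rescale_X {R A : Type*} [CommRing R] [CommRing A] [Algebra R A]
    (F : A⟦X⟧) (G : R⟦X⟧) (ℓ i : ℕ) :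
    (coeff ℓ (map Polynomial.C F * rescale Polynomial.X (map (algebraMap R A[X]) G))).coeff i =
      coeff ℓ (X ^ i * F) * algebraMap R A (coeff i G) := by
  rw [mul_comm (X ^ i), coeff_mul, coeff_mul, Polynomial.finsetSum_coeff, sum_mul]
  refine sum_congr rfl fun p _ => ?_
  rw [coeff_map, coeff_rescale, coeff_map, coeff_X_pow, Polynomial.algebraMap_apply, mul_comm,
    mul_assoc, ← map_mul, mul_comm (Polynomial.X ^ _), Polynomial.coeff_C_mul_X_pow]
  by_cases h : p.2 = i
  · subst h; simp [mul_comm]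
  · simp [h, Ne.symm h]

end PowerSeries

section Operators

variable {K : Type} [Field K]

def cLog (t : K) : (MvPolynomial ℕ K)⟦X⟧ :=
  mk fun r => if r = 0 then 0 else ((1 - t ^ r) / (r : K)) • MvPolynomial.X r

/-- The `r = 0` coefficient vanishes since `1 - t ^ 0 = 0`. -/
def cLogShift (b : ℕ → K) (t : K) : K⟦X⟧ := mk fun r => (1 - t ^ r) / r * b r

@[simp]
theorem constantCoeff_cLog (t : K) : constantCoeff (cLog t) = 0 := by
  simp [cLog, ← coeff_zero_eq_constantCoeff_apply]

@[simp]
theorem constantCoeff_cLogShift (b : ℕ → K) (t : K) : constantCoeff (cLogShift b t) = 0 := by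
  simp [cLogShift, ← coeff_zero_eq_constantCoeff_apply]

def subShiftAlgHom (b : ℕ → K) : MvPolynomial ℕ K →ₐ[K] (MvPolynomial ℕ K)[X] :=
  MvPolynomial.aeval fun n =>
    Polynomial.C (MvPolynomial.X n) + Polynomial.C (MvPolynomial.C (b n)) * Polynomial.X ^ n

theorem subShift_eq_subShiftAlgHom (b : ℕ → K) (g : MvPolynomial ℕ K) :
    subShift b g = subShiftAlgHom b g := rfl

theorem cPoly_eq_coeff_expSeries (t : K) (k : ℕ) : cPoly t k = coeff k (expSeries K (cLog t)) :=
  (coeff_mk _ _).symm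

@[simp]
theorem cPolyZ_natCast (t : K) (n : ℕ) : cPolyZ t n = cPoly t n := by
  simp [cPolyZ]

theorem cPolyZ_sub_eq_coeff_X_pow_mul (t : K) (ℓ i : ℕ) :
    cPolyZ t (ℓ - i) = coeff ℓ (X ^ i * expSeries K (cLog t)) := by
  rw [coeff_X_pow_mul', cPolyZ]
  by_cases h : i ≤ ℓ
  · rw [if_pos (by omega), if_pos h, cPoly_eq_coeff_expSeries]
    congr
    omega
  · rw [if_neg (by omega), if_neg h]

theorem map_subShiftAlgHom_cLog (b : ℕ → K) (t : K) :
    map (subShiftAlgHom b : MvPolynomial ℕ K →+* (MvPolynomial ℕ K)[X]) (cLog t) =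
      map Polynomial.C (cLog t) +
        rescale Polynomial.X (map (algebraMap K (MvPolynomial ℕ K)[X]) (cLogShift b t)) := by
  refine PowerSeries.ext fun r => ?_
  simp only [cLog, cLogShift, coeff_map, coeff_rescale, coeff_mk, map_add]
  split_ifs with hr
  · simp [hr]
  · simp only [RingHom.coe_coe, subShiftAlgHom, Algebra.smul_def, map_mul, MvPolynomial.aeval_X,
      MvPolynomial.aeval_C, Polynomial.algebraMap_apply, MvPolynomial.algebraMap_eq]
    ring

theorem subShift_cPoly [CharZero K] (b : ℕ → K) (t : K) (ℓ : ℕ) :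
    subShift b (cPoly t ℓ) = coeff ℓ (map Polynomial.C (expSeries K (cLog t)) *
      rescale Polynomial.X
        (map (algebraMap K (MvPolynomial ℕ K)[X]) (expSeries K (cLogShift b t)))) := by
  rw [cPoly_eq_coeff_expSeries, subShift_eq_subShiftAlgHom, ← RingHom.coe_coe, ← coeff_map,
    map_expSeries, map_subShiftAlgHom_cLog, expSeries_add
      (by rw [← coeff_zero_eq_constantCoeff_apply, coeff_map, coeff_zero_eq_constantCoeff_apply,
        constantCoeff_cLog, map_zero])
      (by rw [← coeff_zero_eq_constantCoeff_apply, coeff_rescale, coeff_map,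
        coeff_zero_eq_constantCoeff_apply, constantCoeff_cLogShift, map_zero, mul_zero])]
  refine congrArg (coeff ℓ) (congrArg₂ (· * ·) ?_ ?_)
  · exact (map_expSeries Polynomial.CAlgHom _).symm
  · rw [← rescale_expSeries]
    exact congrArg _ (map_expSeries (Algebra.ofId _ _) _).symm

theorem coeff_subShift_cPoly [CharZero K] (b : ℕ → K) (t : K) (ℓ i : ℕ) :
    (subShift b (cPoly t ℓ)).coeff i =
      cPolyZ t (ℓ - i) * MvPolynomial.C (coeff i (expSeries K (cLogShift b t))) := by
  rw [subShift_cPoly, coeff_coeff_map_C_mul_rescale_X, cPolyZ_sub_eq_coeff_X_pow_mul,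
    MvPolynomial.algebraMap_eq]

theorem ctOp_cPoly_mul [CharZero K] (b : ℕ → K) (t : K) (k ℓ : ℕ) (g : MvPolynomial ℕ K) :
    ctOp b k (cPoly t ℓ * g) = ∑ p ∈ antidiagonal k,
      MvPolynomial.C (coeff p.2 (expSeries K (cLogShift b t))) *
        (cPolyZ t (ℓ - p.2) * ctOp b p.1 g) := by
  rw [ctOp, subShift_eq_subShiftAlgHom, mul_comm, map_mul, Polynomial.coeff_mul]
  refine sum_congr rfl fun p _ => ?_
  rw [← subShift_eq_subShiftAlgHom, ← subShift_eq_subShiftAlgHom, coeff_subShift_cPoly, ctOp]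
  ring

theorem cLogShift_pow_sub_one_add_logSeries (s t : K) :
    cLogShift (fun r => s ^ r - 1) t + logSeries 1 + logSeries (t * s) =
      logSeries s + logSeries t := by
  ext r
  simp only [cLogShift, logSeries, map_add, coeff_mk, one_pow, mul_pow]
  ring

theorem mk_qtInt (t s : K) : mk (qtInt t s) = X * (rescale t (mk 1) * rescale s (mk 1)) := by
  ext n
  cases n with
  | zero => simp [qtInt]
  | succ n =>
    rw [coeff_succ_X_mul, coeff_mul, coeff_mk, qtInt,
      Finset.Nat.sum_antidiagonal_eq_sum_range_succ
        (fun i j => coeff i (rescale t (mk 1)) * coeff j (rescale s (mk (1 : ℕ → K))))]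
    simp [coeff_rescale]

theorem expSeries_cLogShift_pow_sub_one [CharZero K] (s t : K) :
    expSeries K (cLogShift (fun r => s ^ r - 1) t) =
      1 + C ((1 - t) * (s - 1)) * mk (qtInt t s) := by
  set E := expSeries K (cLogShift (fun r => s ^ r - 1) t)
  have hprod : E * rescale 1 (mk 1) * rescale (t * s) (mk 1) =
      rescale s (mk 1) * rescale t (mk 1) := by
    simp only [E, ← expSeries_logSeries]
    rw [← expSeries_add (constantCoeff_cLogShift _ t) (constantCoeff_logSeries 1),
      ← expSeries_add (by simp) (constantCoeff_logSeries (t * s)),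
      cLogShift_pow_sub_one_add_logSeries, expSeries_add (by simp) (by simp)]
  have h1 := rescale_mk_one_mul_one_sub (1 : K)
  have hts := rescale_mk_one_mul_one_sub (t * s)
  have hs := rescale_mk_one_mul_one_sub s
  have ht := rescale_mk_one_mul_one_sub t
  rw [mk_qtInt]
  simp only [map_mul, map_sub, map_one] at *
  -- `(1 - X)(1 - tsX) = (1 - sX)(1 - tX) + (1 - t)(s - 1)X`
  linear_combination (1 - X) * (1 - C t * C s * X) * hprod
    - E * (rescale (t * s) (mk 1) * (1 - C t * C s * X)) * h1 - E * hts
    + rescale t (mk 1) * (1 - C t * X) * hs + ht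

theorem coeff_expSeries_cLogShift_pow_sub_one [CharZero K] (s t : K) {n : ℕ} (hn : n ≠ 0) :
    coeff n (expSeries K (cLogShift (fun r => s ^ r - 1) t)) =
      (1 - t) * (s - 1) * qtInt t s n := by
  rw [expSeries_cLogShift_pow_sub_one, map_add, coeff_one, if_neg hn, zero_add, coeff_C_mul,
    coeff_mk]

end Operators

end

theorem ct_c_commutator_general {K : Type} [Field K] [CharZero K] (q t : K)
    (k ℓ : ℕ) (g : MvPolynomial ℕ K) :
    ctOp (bq q) k (cPoly t ℓ * g) - cPoly t ℓ * ctOp (bq q) k g =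
      MvPolynomial.C ((1 - t) * (q⁻¹ - 1)) *
        ∑ m ∈ Finset.range k,
          MvPolynomial.C (qtInt t q⁻¹ (k - m)) *
            (cPolyZ t ((m : ℤ) + ℓ - k) * ctOp (bq q) m g) := by
  rw [ctOp_cPoly_mul, Finset.Nat.sum_antidiagonal_eq_sum_range_succ (fun m i =>
      MvPolynomial.C (coeff i (expSeries K (cLogShift (bq q) t))) *
        (cPolyZ t (ℓ - i) * ctOp (bq q) m g)), sum_range_succ, Nat.sub_self,
    coeff_zero_eq_constantCoeff_apply, constantCoeff_expSeries, map_one, one_mul, Nat.cast_zero,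
    sub_zero, cPolyZ_natCast, add_sub_cancel_right, mul_sum]
  refine sum_congr rfl fun m hm => ?_
  have hmk : m < k := mem_range.mp hm
  rw [show bq q = fun r => q⁻¹ ^ r - 1 from rfl,
    coeff_expSeries_cLogShift_pow_sub_one _ _ (by omega : k - m ≠ 0), map_mul,
    Nat.cast_sub hmk.le, show (ℓ : ℤ) - (k - m) = m + ℓ - k by ring]
  ring

/-- With `\widetilde{c}_k = ctOp (bq q) k` (differential operators in the `p`'s)
and `c_ℓ = cPoly t ℓ` (multiplication operators), the commutator satisfies
`[\widetilde{c}_k, c_ℓ] = (1-t)(q⁻¹-1) ∑_{m=0}^{k-1} [[k-m]]_{(t,q⁻¹)} c_{m+ℓ-k} \widetilde{c}_m`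
(as operators on `ℚ(q,t)[p₁,p₂,…]`, stated pointwise), where `c_n = 0` for `n < 0`. -/
theorem ct_c_commutator {K : Type} [Field K] [CharZero K] (q t : K) (hq : q ≠ 0)
    (k ℓ : ℕ) (g : MvPolynomial ℕ K) :
    ctOp (bq q) k (cPoly t ℓ * g) - cPoly t ℓ * ctOp (bq q) k g =
      MvPolynomial.C ((1 - t) * (q⁻¹ - 1)) *
        ∑ m ∈ Finset.range k,
          MvPolynomial.C (qtInt t q⁻¹ (k - m)) *
            (cPolyZ t ((m : ℤ) + ℓ - k) * ctOp (bq q) m g) :=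
  ct_c_commutator_general q t k ℓ g
end

section
/- With $a_k := (1-t^k)p_k/k$ (multiplication operator) and $b_n := (q^{-n}-1)\partial_{p_n}$, the two-variable generating function of commutators satisfies $[\exp(\sum_n b_n z^{-n}), \exp(\sum_m a_m w^m)] = \left(\frac{(1-t)(q^{-1}-1)(w/z)}{(1-t(w/z))(1-q^{-1}(w/z))}\right) \exp(\sum_m a_m w^m)\exp(\sum_n b_n z^{-n})$ as formal power series identities (expanding the prefactor in powers of $w/z$). -/
/-!
Write `E(z) = ∑ c_ℓ z^ℓ = exp(∑_r (1-t^r)/r · p_r z^r)` and `u = q⁻¹`. The operator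
`exp(∑ b_n z^{-n})` acts through the ring homomorphism `σ : p_r ↦ p_r + (u^r - 1) w^r`, so its
commutator with multiplication by `c_ℓ` is read off from `σ(c_ℓ)`, i.e. from `σ(E)`. Both `σ(E(z))`
and `E(z) · P(wz)`, where `P(x) = (1-x)(1-tux)/((1-tx)(1-ux))` is the exponential of the scalar
commutator, have constant term `1` and satisfy `θ Y = Φ Y` for the Euler operator `θ = z d/dz` and
the same `Φ = ∑_r (1-t^r)(p_r + (u^r-1) w^r) z^r`; in characteristic zero this equation has a
unique such solution, so they are equal. Expanding `P(x) = 1 + (1-t)(u-1) x / ((1-tx)(1-ux))`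
gives the coefficients `(1-t)(u-1)[[j]]_{(t,u)}`.
-/

open PowerSeries

noncomputable section

namespace PowerSeries

variable {R : Type*} [CommRing R]

theorem coeff_X_mul_derivative (f : R⟦X⟧) (n : ℕ) :
    coeff n (X * d⁄dX R f) = n * coeff n f := by
  cases n with
  | zero => simp
  | succ n => rw [coeff_succ_X_mul, coeff_derivative, mul_comm]; push_cast; rfl

/-- `Φ = X · (log A)'`. -/
def HasEulerLogDeriv (A Φ : R⟦X⟧) : Prop := X * d⁄dX R A = Φ * A

namespace HasEulerLogDeriv

variable {A B Φ Ψ : R⟦X⟧}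

theorem mul (hA : HasEulerLogDeriv A Φ) (hB : HasEulerLogDeriv B Ψ) :
    HasEulerLogDeriv (A * B) (Φ + Ψ) := by
  unfold HasEulerLogDeriv at *
  rw [Derivation.leibniz, smul_eq_mul, smul_eq_mul]
  linear_combination A * hB + B * hA

theorem of_mul_eq_one (hA : HasEulerLogDeriv A Φ) (h : A * B = 1) : HasEulerLogDeriv B (-Φ) := by
  have h0 := congrArg (X * d⁄dX R ·) h
  simp only [Derivation.leibniz, smul_eq_mul, Derivation.map_one_eq_zero, mul_zero] at h0
  unfold HasEulerLogDeriv at *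
  linear_combination (-(X * d⁄dX R B) - Φ * B) * h + B * h0 - B ^ 2 * hA

theorem map {S : Type*} [CommRing S] (φ : R →+* S) (hA : HasEulerLogDeriv A Φ) :
    HasEulerLogDeriv (PowerSeries.map φ A) (PowerSeries.map φ Φ) := by
  ext n
  rw [coeff_X_mul_derivative, ← map_mul, ← hA, coeff_map, coeff_map, coeff_X_mul_derivative,
    map_mul, map_natCast]

theorem rescale (a : R) (hA : HasEulerLogDeriv A Φ) :
    HasEulerLogDeriv (rescale a A) (rescale a Φ) := by
  ext n
  rw [coeff_X_mul_derivative, ← map_mul, ← hA, coeff_rescale, coeff_rescale,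
    coeff_X_mul_derivative]
  ring

/-- Comparing coefficients of `θ A = Φ A` gives `n aₙ = ∑_{i ≥ 1} Φᵢ aₙ₋ᵢ`, a recursion that
determines `A` from its constant term once `n` can be cancelled. -/
theorem unique [IsAddTorsionFree R] (hA : HasEulerLogDeriv A Φ) (hB : HasEulerLogDeriv B Φ)
    (hΦ : constantCoeff Φ = 0) (h₀ : constantCoeff A = constantCoeff B) : A = B := by
  ext n
  induction n using Nat.strong_induction_on with
  | _ n ih =>
    rcases Nat.eq_zero_or_pos n with rfl | hn
    · simpa using h₀
    have key : (n : R) * coeff n A = n * coeff n B := by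
      rw [← coeff_X_mul_derivative, ← coeff_X_mul_derivative, hA, hB, coeff_mul, coeff_mul]
      refine Finset.sum_congr rfl fun p hp => ?_
      rcases Nat.eq_zero_or_pos p.1 with h | h
      · rw [h, coeff_zero_eq_constantCoeff_apply, hΦ, zero_mul, zero_mul]
      · rw [ih p.2 (by have := Finset.HasAntidiagonal.mem_antidiagonal.mp hp; omega)]
    simp only [← nsmul_eq_mul] at key
    exact IsAddTorsionFree.nsmul_right_injective hn.ne' key

end HasEulerLogDeriv

def geomSeries (a : R) : R⟦X⟧ := mk fun n => a ^ n

theorem one_sub_C_mul_X_mul_geomSeries (a : R) : (1 - C a * X) * geomSeries a = 1 := by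
  have := congrArg (PowerSeries.rescale a) (mk_one_mul_one_sub_eq_one R)
  rw [map_mul, map_sub, map_one, rescale_X, rescale_mk, mul_comm] at this
  simpa [geomSeries] using this

theorem hasEulerLogDeriv_one_sub_C_mul_X (a : R) :
    HasEulerLogDeriv (1 - C a * X) (1 - geomSeries a) := by
  have h := one_sub_C_mul_X_mul_geomSeries a
  rw [HasEulerLogDeriv, map_sub, Derivation.map_one_eq_zero, Derivation.leibniz, derivative_X,
    derivative_C]
  linear_combination h

theorem hasEulerLogDeriv_geomSeries (a : R) :
    HasEulerLogDeriv (geomSeries a) (geomSeries a - 1) := by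
  simpa using (hasEulerLogDeriv_one_sub_C_mul_X a).of_mul_eq_one
    (one_sub_C_mul_X_mul_geomSeries a)

/-- `e^{[A,B]} = (1 - x)(1 - t u x) / ((1 - t x)(1 - u x))`, written as `1 + (1-t)(u-1)x / …`
so that its coefficients can be read off. -/
def expCommutatorFactor (t u : R) : R⟦X⟧ :=
  1 + C ((1 - t) * (u - 1)) * X * geomSeries t * geomSeries u

theorem expCommutatorFactor_eq (t u : R) : expCommutatorFactor t u =
    (1 - C 1 * X) * (1 - C (t * u) * X) * geomSeries t * geomSeries u := by
  have ht := one_sub_C_mul_X_mul_geomSeries t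
  have hu := one_sub_C_mul_X_mul_geomSeries u
  simp only [expCommutatorFactor, map_mul, map_sub, map_one]
  linear_combination (-(1 - C u * X) * geomSeries u) * ht - hu

theorem hasEulerLogDeriv_expCommutatorFactor (t u : R) :
    HasEulerLogDeriv (expCommutatorFactor t u) (mk fun r => (1 - t ^ r) * (u ^ r - 1)) := by
  convert (((hasEulerLogDeriv_one_sub_C_mul_X 1).mul
    (hasEulerLogDeriv_one_sub_C_mul_X (t * u))).mul (hasEulerLogDeriv_geomSeries t)).mul
    (hasEulerLogDeriv_geomSeries u) using 1
  · exact expCommutatorFactor_eq t u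
  · ext r
    simp only [geomSeries, map_add, map_sub, coeff_one, coeff_mk]
    split_ifs <;> ring

theorem coeff_expCommutatorFactor {K : Type} [Field K] (t u : K) (j : ℕ) :
    coeff j (expCommutatorFactor t u) =
      if j = 0 then 1 else (1 - t) * (u - 1) * qtInt t u j := by
  rcases j with _ | j
  · simp [expCommutatorFactor]
  · rw [expCommutatorFactor, mul_assoc, mul_assoc, map_add, coeff_one, coeff_C_mul,
      coeff_succ_X_mul, coeff_mul, Finset.Nat.sum_antidiagonal_eq_sum_range_succ_mk, qtInt]
    simp [geomSeries]

end PowerSeries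

section TruncExp

open Finset

variable {K A : Type*} [Field K] [CommRing A] [Algebra K A]

variable (K) in
def truncExp (N : ℕ) (f : A⟦X⟧) : A⟦X⟧ := ∑ k ∈ range N, (k.factorial : K)⁻¹ • f ^ k

theorem derivative_truncExp_succ [CharZero K] (N : ℕ) (f : A⟦X⟧) :
    d⁄dX A (truncExp K (N + 1) f) = d⁄dX A f * truncExp K N f := by
  rw [truncExp, truncExp, map_sum, sum_range_succ', mul_sum]
  simp only [pow_zero, Derivation.map_smul_of_tower, Derivation.map_one_eq_zero, smul_zero,
    add_zero, derivative_pow]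
  refine sum_congr rfl fun k _ => ?_
  rw [Nat.add_sub_cancel, Nat.factorial_succ, Nat.cast_mul, mul_inv, mul_smul, mul_assoc,
    ← nsmul_eq_mul, ← Nat.cast_smul_eq_nsmul K, smul_comm _ ((k + 1 : ℕ) : K), smul_smul,
    inv_mul_cancel₀ (Nat.cast_ne_zero.mpr k.succ_ne_zero), one_smul, mul_comm, mul_smul_comm]

theorem coeff_truncExp_of_lt {f : A⟦X⟧} (hf : constantCoeff f = 0) {n N : ℕ} (h : n < N) :
    coeff n (truncExp K N f) = coeff n (truncExp K (n + 1) f) := by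
  have hX : X ^ (n + 1) ∣ truncExp K N f - truncExp K (n + 1) f := by
    rw [truncExp, truncExp, ← sum_range_add_sum_Ico _ (by omega : n + 1 ≤ N), add_sub_cancel_left]
    refine dvd_sum fun k hk => ?_
    exact (pow_dvd_pow _ (mem_Ico.mp hk).1).trans
      (dvd_smul_of_dvd _ (pow_dvd_pow_of_dvd (X_dvd_iff.mpr hf) k))
  have := X_pow_dvd_iff.mp hX n (by omega)
  rwa [map_sub, sub_eq_zero] at this

theorem hasEulerLogDeriv_mk_coeff_truncExp [CharZero K] {f : A⟦X⟧} (hf : constantCoeff f = 0) :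
    HasEulerLogDeriv (mk fun n => coeff n (truncExp K (n + 1) f)) (X * d⁄dX A f) := by
  set E : A⟦X⟧ := mk fun n => coeff n (truncExp K (n + 1) f)
  have hE : ∀ {n N}, n < N → coeff n (truncExp K N f) = coeff n E := fun h => by
    rw [coeff_truncExp_of_lt hf h, coeff_mk]
  have hE' : d⁄dX A E = d⁄dX A f * E := by
    ext n
    rw [coeff_derivative, ← hE (Nat.lt_succ_self _), ← coeff_derivative,
      derivative_truncExp_succ, coeff_mul, coeff_mul]
    exact sum_congr rfl fun p hp => by
      rw [hE (by have := mem_antidiagonal.mp hp; omega)]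
  rw [HasEulerLogDeriv, hE', mul_assoc]

end TruncExp

section SubShift

variable {K : Type} [Field K]

def cPolyLog (t : K) : (MvPolynomial ℕ K)⟦X⟧ :=
  mk fun r => if r = 0 then 0 else ((1 - t ^ r) / (r : K)) • MvPolynomial.X r

theorem cPoly_zero (t : K) : cPoly t 0 = 1 := by
  simp [cPoly, expCoeffP]

def subShiftHom (b : ℕ → K) : MvPolynomial ℕ K →ₐ[K] Polynomial (MvPolynomial ℕ K) :=
  MvPolynomial.aeval fun n =>
    Polynomial.C (MvPolynomial.X n) + Polynomial.C (MvPolynomial.C (b n)) * Polynomial.X ^ n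

theorem subShift_mul (b : ℕ → K) (f g : MvPolynomial ℕ K) :
    subShift b (f * g) = subShift b f * subShift b g :=
  map_mul (subShiftHom b) f g

variable [CharZero K]

theorem X_mul_derivative_cPolyLog (t : K) :
    X * d⁄dX _ (cPolyLog t) = mk fun r => (1 - t ^ r) • MvPolynomial.X r := by
  ext r
  rw [coeff_X_mul_derivative, cPolyLog, coeff_mk, coeff_mk]
  split_ifs with hr
  · simp [hr]
  · rw [← nsmul_eq_mul, ← Nat.cast_smul_eq_nsmul K, smul_smul,
      mul_div_cancel₀ _ (Nat.cast_ne_zero.mpr hr)]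

theorem hasEulerLogDeriv_mk_cPoly (t : K) :
    HasEulerLogDeriv (mk (cPoly t)) (X * d⁄dX _ (cPolyLog t)) :=
  hasEulerLogDeriv_mk_coeff_truncExp (K := K) (by simp)

theorem map_subShiftHom_X_mul_derivative_cPolyLog (t u : K) :
    PowerSeries.map (subShiftHom fun n => u ^ n - 1).toRingHom (X * d⁄dX _ (cPolyLog t)) =
      PowerSeries.map Polynomial.C (X * d⁄dX _ (cPolyLog t)) +
        rescale Polynomial.X (PowerSeries.map (algebraMap K _)
          (mk fun r => (1 - t ^ r) * (u ^ r - 1))) := by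
  ext r : 1
  rw [X_mul_derivative_cPolyLog]
  simp only [map_add, coeff_map, coeff_rescale, coeff_mk, AlgHom.toRingHom_eq_coe,
    RingHom.coe_coe, map_smul, subShiftHom, MvPolynomial.aeval_X]
  simp only [Algebra.smul_def, Polynomial.algebraMap_apply, MvPolynomial.algebraMap_eq, map_mul]
  ring

theorem map_subShiftHom_mk_cPoly (t u : K) :
    PowerSeries.map (subShiftHom fun n => u ^ n - 1).toRingHom (mk (cPoly t)) =
      rescale Polynomial.X (PowerSeries.map (algebraMap K _) (expCommutatorFactor t u)) *
        PowerSeries.map Polynomial.C (mk (cPoly t)) := by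
  have hσ := (hasEulerLogDeriv_mk_cPoly t).map (subShiftHom fun n => u ^ n - 1).toRingHom
  rw [map_subShiftHom_X_mul_derivative_cPolyLog, add_comm] at hσ
  refine hσ.unique ((((hasEulerLogDeriv_expCommutatorFactor t u).map (algebraMap K _)).rescale
    Polynomial.X).mul ((hasEulerLogDeriv_mk_cPoly t).map Polynomial.C)) ?_ ?_
  · simp only [← coeff_zero_eq_constantCoeff_apply, map_add, coeff_rescale, coeff_map, coeff_mk,
      coeff_zero_X_mul]
    simp
  · simp only [← coeff_zero_eq_constantCoeff_apply, coeff_mul, coeff_rescale, coeff_map, coeff_mk]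
    simp [expCommutatorFactor, cPoly_zero]

theorem coeff_subShift_cPoly_s7 (t u : K) (ℓ j : ℕ) :
    (subShift (fun n => u ^ n - 1) (cPoly t ℓ)).coeff j =
      if j ≤ ℓ then MvPolynomial.C (coeff j (expCommutatorFactor t u)) * cPoly t (ℓ - j)
      else 0 := by
  have h := congrArg (coeff ℓ) (map_subShiftHom_mk_cPoly t u)
  rw [coeff_map, coeff_mk, coeff_mul, Finset.Nat.sum_antidiagonal_eq_sum_range_succ_mk] at h
  change ((subShiftHom _).toRingHom (cPoly t ℓ)).coeff j = _
  rw [h, Polynomial.finsetSum_coeff]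
  have hterm : ∀ i, Polynomial.X ^ i * algebraMap K _ (coeff i (expCommutatorFactor t u)) *
      Polynomial.C (cPoly t (ℓ - i)) = Polynomial.C
        (MvPolynomial.C (coeff i (expCommutatorFactor t u)) * cPoly t (ℓ - i)) * Polynomial.X ^ i :=
    fun i => by rw [Polynomial.algebraMap_apply, MvPolynomial.algebraMap_eq, map_mul]; ring
  simp only [coeff_rescale, coeff_map, coeff_mk, hterm, Polynomial.coeff_C_mul_X_pow,
    Finset.sum_ite_eq, Finset.mem_range, Nat.lt_succ_iff]

open Finset in
theorem ctOp_cPoly_mul_s7 (q t : K) (k ℓ : ℕ) (g : MvPolynomial ℕ K) :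
    ctOp (bq q) k (cPoly t ℓ * g) = ∑ j ∈ range (min k ℓ + 1),
      MvPolynomial.C (coeff j (expCommutatorFactor t q⁻¹)) *
        (cPoly t (ℓ - j) * ctOp (bq q) (k - j) g) := by
  have hfilter : (range (k + 1)).filter (· ≤ ℓ) = range (min k ℓ + 1) := by
    ext j
    simp only [mem_filter, mem_range]
    omega
  rw [ctOp, subShift_mul, Polynomial.coeff_mul, Nat.sum_antidiagonal_eq_sum_range_succ_mk,
    ← hfilter, sum_filter]
  unfold bq
  simp only [coeff_subShift_cPoly_s7, ite_mul, zero_mul, mul_assoc]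
  rfl

end SubShift

end

theorem exp_commutator_genFunc_general {K : Type} [Field K] [CharZero K] (q t : K)
    (k ℓ : ℕ) (g : MvPolynomial ℕ K) :
    ctOp (bq q) k (cPoly t ℓ * g) - cPoly t ℓ * ctOp (bq q) k g =
      ∑ j ∈ Finset.Icc 1 (min k ℓ),
        MvPolynomial.C ((1 - t) * (q⁻¹ - 1) * qtInt t q⁻¹ j) *
          (cPoly t (ℓ - j) * ctOp (bq q) (k - j) g) := by
  rw [ctOp_cPoly_mul_s7, Finset.sum_range_succ', ← Finset.Ico_add_one_right_eq_Icc,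
    Finset.sum_Ico_eq_sum_range, Nat.add_sub_cancel]
  simp [coeff_expCommutatorFactor, add_comm 1]

/-- the two-variable generating function identity
`[exp(∑_n b_n z^{-n}), exp(∑_m a_m w^m)]
  = ((1-t)(q⁻¹-1)(w/z))/((1-t(w/z))(1-q⁻¹(w/z))) · exp(∑_m a_m w^m) exp(∑_n b_n z^{-n})`,
with `a_m = (1-t^m)p_m/m` and `b_n = (q^{-n}-1)∂_{p_n}`, stated coefficientwise: extracting
the coefficient of `z^{-k} w^ℓ` and expanding the prefactor as
`∑_{j≥1} (1-t)(q⁻¹-1)[[j]]_{(t,q⁻¹)} (w/z)^j` (note `exp(∑ a_m w^m) = ∑_ℓ c_ℓ w^ℓ` and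
`exp(∑ b_n z^{-n}) = ∑_k \widetilde{c}_k z^{-k}`, which vanish for negative index,
whence `j ≤ min k ℓ`). -/
theorem exp_commutator_genFunc {K : Type} [Field K] [CharZero K] (q t : K) (hq : q ≠ 0)
    (k ℓ : ℕ) (g : MvPolynomial ℕ K) :
    ctOp (bq q) k (cPoly t ℓ * g) - cPoly t ℓ * ctOp (bq q) k g =
      ∑ j ∈ Finset.Icc 1 (min k ℓ),
        MvPolynomial.C ((1 - t) * (q⁻¹ - 1) * qtInt t q⁻¹ j) *
          (cPoly t (ℓ - j) * ctOp (bq q) (k - j) g) :=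
  exp_commutator_genFunc_general q t k ℓ g
end

section
/- On the exterior-algebra sector with exactly one fermion, the operator $\mathsf{T}_q := \sum_{n\ge1}\sum_{k\ge0} \widetilde{c}_k^\vee \, \pi_{n+k}\, q^{n-1} \partial_{\pi_n}$ satisfies $\mathsf{T}_q(\pi_k p_\ell) = q^{k-1}(\pi_k p_\ell + (q^\ell - 1)\pi_{k+\ell})$ for all $k, \ell \ge 1$. -/
noncomputable section

variable {K : Type} [Field K] [CharZero K]

/-- The super-polynomial ring `K[p₁,p₂,…] ⊗ Λ[π₁,π₂,…]`, modelled by finitely supported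
functions assigning to each finite set `T` of fermionic indices (the wedge monomial
`π_{t₁} ∧ ⋯ ∧ π_{t_m}`, indices increasing) a bosonic coefficient. -/
abbrev SP (K : Type) [Field K] := Finset ℕ →₀ MvPolynomial ℕ K

/-- Multiplication by a bosonic element `f`, acting coefficientwise. -/
def fmul (f : MvPolynomial ℕ K) (v : SP K) : SP K :=
  v.sum fun T r => Finsupp.single T (f * r)

/-- A bosonic operator `A` (e.g. a differential operator in the `p`'s) acting
coefficientwise. -/
def fop (A : MvPolynomial ℕ K → MvPolynomial ℕ K) (v : SP K) : SP K :=
  v.sum fun T r => Finsupp.single T (A r)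

/-- Left multiplication by the fermionic generator `π_k`:
`π_k · e_T = (-1)^{#{s∈T : s<k}} e_{T∪{k}}` for `k ∉ T`, and `0` otherwise. -/
def fermi (k : ℕ) (v : SP K) : SP K :=
  v.sum fun T r =>
    if k ∈ T then 0
    else Finsupp.single (insert k T)
      ((-1 : MvPolynomial ℕ K) ^ ((T.filter fun j => j < k).card) * r)

/-- The odd derivation `∂_{π_k}` with `{∂_{π_k}, π_ℓ} = δ_{kℓ}`:
`∂_{π_k} e_T = (-1)^{#{s∈T : s<k}} e_{T\{k}}` for `k ∈ T`, and `0` otherwise. -/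
def dfermi (k : ℕ) (v : SP K) : SP K :=
  v.sum fun T r =>
    if k ∈ T then
      Finsupp.single (T.erase k)
        ((-1 : MvPolynomial ℕ K) ^ ((T.filter fun j => j < k).card) * r)
    else 0

end

noncomputable section

variable {K : Type} [Field K] [CharZero K]

/-- The operator `𝖳_q = ∑_{n≥1} ∑_{k≥0} \widetilde{c}_k^∨ π_{n+k} q^{n-1} ∂_{π_n}`
(the index shift `n ↦ n+1` runs the first sum over `n ≥ 1`); both sums are locally finite. -/
def Tq (q : K) (v : SP K) : SP K :=
  ∑ᶠ n : ℕ, ∑ᶠ k : ℕ,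
    fop (ctOp (bqVee q) k)
      (fermi (n + 1 + k) (fmul (MvPolynomial.C ((q : K) ^ n)) (dfermi (n + 1) v)))

end

/-!
Only `∂_{π_k}` survives on `π_k p_ℓ`, so `𝖳_q (π_k p_ℓ) = q^{k-1} ∑_m π_{k+m} \widetilde{c}_m^∨ p_ℓ`.
Since `\widetilde{c}_m^∨` substitutes `p_n ↦ p_n + (q^n - 1) w^n` and extracts the coefficient of
`w^m`, it sends `p_ℓ` to `p_ℓ` for `m = 0`, to `q^ℓ - 1` for `m = ℓ`, and to `0` otherwise.
-/

section

variable {K : Type} [Field K]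

open MvPolynomial

@[simp]
lemma fmul_single (f : MvPolynomial ℕ K) (T : Finset ℕ) (r : MvPolynomial ℕ K) :
    fmul f (Finsupp.single T r) = Finsupp.single T (f * r) := by
  simp [fmul, -Finsupp.single_mul]

@[simp]
lemma fmul_zero (f : MvPolynomial ℕ K) : fmul f (0 : SP K) = 0 :=
  Finsupp.sum_zero_index

lemma fop_single {A : MvPolynomial ℕ K → MvPolynomial ℕ K} (hA : A 0 = 0)
    (T : Finset ℕ) (r : MvPolynomial ℕ K) :
    fop A (Finsupp.single T r) = Finsupp.single T (A r) := by
  simp [fop, hA]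

@[simp]
lemma fop_zero (A : MvPolynomial ℕ K → MvPolynomial ℕ K) : fop A (0 : SP K) = 0 :=
  Finsupp.sum_zero_index

@[simp]
lemma fermi_single_empty (n : ℕ) (r : MvPolynomial ℕ K) :
    fermi n (Finsupp.single ∅ r) = Finsupp.single {n} r := by
  simp [fermi, -Finsupp.single_mul]

@[simp]
lemma fermi_zero (n : ℕ) : fermi n (0 : SP K) = 0 :=
  Finsupp.sum_zero_index

lemma dfermi_single_singleton (n k : ℕ) (r : MvPolynomial ℕ K) :
    dfermi n (Finsupp.single {k} r) = if n = k then Finsupp.single ∅ r else 0 := by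
  by_cases h : n = k
  · subst h
    simp [dfermi, Finset.filter_singleton, -Finsupp.single_mul]
  · simp [dfermi, h]

@[simp]
lemma ctOp_zero (b : ℕ → K) (m : ℕ) : ctOp b m 0 = 0 := by
  simp [ctOp, subShift]

lemma ctOp_C_mul (b : ℕ → K) (m : ℕ) (c : K) (g : MvPolynomial ℕ K) :
    ctOp b m (C c * g) = C c * ctOp b m g := by
  simp [ctOp, subShift, Polynomial.coeff_C_mul]

lemma ctOp_X (b : ℕ → K) (m ℓ : ℕ) :
    ctOp b m (X ℓ) = (if m = 0 then X ℓ else 0) + if m = ℓ then C (b ℓ) else 0 := by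
  simp [ctOp, subShift, Polynomial.coeff_C, Polynomial.coeff_X_pow]

lemma Tq_single_singleton (q : K) {k : ℕ} (hk : 1 ≤ k) (g : MvPolynomial ℕ K) :
    Tq q (Finsupp.single {k} g) =
      ∑ᶠ m : ℕ, Finsupp.single {k + m}
        (C (q ^ (k - 1)) * ctOp (bqVee q) m g) := by
  obtain ⟨n, rfl⟩ : ∃ n, k = n + 1 := ⟨k - 1, by omega⟩
  rw [Tq, finsum_eq_single _ n]
  · simp only [dfermi_single_singleton, if_pos, fmul_single, fermi_single_empty,
      fop_single (ctOp_zero _ _), ctOp_C_mul, Nat.add_sub_cancel]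
  · intro j hj
    simp [dfermi_single_singleton, hj, finsum_zero]

end

noncomputable section

variable {K : Type} [Field K] [CharZero K]

theorem Tq_on_pi_p_general (q : K) (k ℓ : ℕ) (hk : 1 ≤ k) (hℓ : 1 ≤ ℓ) :
    Tq q (Finsupp.single {k} (MvPolynomial.X ℓ)) =
      Finsupp.single {k} (MvPolynomial.C ((q : K) ^ (k - 1)) * MvPolynomial.X ℓ) +
        Finsupp.single {k + ℓ} (MvPolynomial.C ((q : K) ^ (k - 1) * (q ^ ℓ - 1))) := by
  have hsupp : (Function.support fun m : ℕ => (Finsupp.single {k + m}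
      (MvPolynomial.C (q ^ (k - 1)) * ctOp (bqVee q) m (MvPolynomial.X ℓ)) : SP K)) ⊆
      (({0, ℓ} : Finset ℕ) : Set ℕ) := by
    intro m hm
    contrapose! hm
    simp_all [ctOp_X]
  rw [Tq_single_singleton q hk, finsum_eq_finsetSum_of_support_subset _ hsupp,
    Finset.sum_pair (by omega)]
  have hℓ0 : ℓ ≠ 0 := by omega
  simp [ctOp_X, bqVee, hℓ0, hℓ0.symm, -Finsupp.single_mul]

/-- on the one-fermion sector,
`𝖳_q (π_k p_ℓ) = q^{k-1} (π_k p_ℓ + (q^ℓ - 1) π_{k+ℓ})` for all `k, ℓ ≥ 1`. -/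
theorem Tq_on_pi_p (q : K) (hq : q ≠ 0) (k ℓ : ℕ) (hk : 1 ≤ k) (hℓ : 1 ≤ ℓ) :
    Tq q (Finsupp.single {k} (MvPolynomial.X ℓ)) =
      Finsupp.single {k} (MvPolynomial.C ((q : K) ^ (k - 1)) * MvPolynomial.X ℓ) +
        Finsupp.single {k + ℓ} (MvPolynomial.C ((q : K) ^ (k - 1) * (q ^ ℓ - 1))) :=
  Tq_on_pi_p_general q k ℓ hk hℓ

end
end
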